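/- For every fixed τ > 0, the function x ↦ 𝓗(τ,x) is left-continuous on ℝ_{>0}, non-increasing on ℝ_{>0}, strictly decreasing on (0, x_e(τ)), and 𝓗(τ,x) → 0 as x → x_e(τ)⁻. -/

import Mathlib

open MeasureTheory Filter

/-- `φ_n(w) = Σ_{k≥1} k^n w^k/(1-q^k)` as a real function. -/
noncomputable def phiR (q : ℝ) (n : ℕ) (w : ℝ) : ℝ :=
  ∑' k : ℕ, ((k : ℝ) + 1) ^ n * w ^ (k + 1) / (1 - q ^ (k + 1))

/-- `Φ_n(w∣x) = ∫₀ˣ φ_n(w/ξ(y)) dy`. -/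
noncomputable def PhiI (q : ℝ) (n : ℕ) (ξ : ℝ → ℝ) (x w : ℝ) : ℝ :=
  ∫ y in Set.Ioo 0 x, phiR q n (w / ξ y)

/-- `τ_e(x) = ∫₀ˣ dy/((1-q)ξ(y))`. -/
noncomputable def tauE (q : ℝ) (ξ : ℝ → ℝ) (x : ℝ) : ℝ :=
  ∫ y in Set.Ioo 0 x, 1 / ((1 - q) * ξ y)


/-!
Write `g x = min (ω x) (W_x)`, so that `𝓗(τ,x) = τ g x − Φ₁(g x∣x)` on `(0, x_e)`. Three properties
of `Φₙ(w∣x)` carry the argument: it increases strictly in `x`, `Φ₂(w∣x)/w` is nondecreasing in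
`w`, and `Φ₁(·∣x)` is convex with `w ∂_w Φ₁ = Φ₂`. The first two give `Φ₂(w∣x) ≤ τ w` for
`w ≤ ω x`, so `ω` is strictly decreasing; with convexity, `w ↦ τ w − Φ₁(w∣x)` is nondecreasing
on `(0, ω x]`. Comparing through `w = min (g x₁) (ω x₂)` shows that `𝓗` decreases strictly.

If `L` is the left limit of `ω` at `t`, cutting `(0, t)` at `x' ↑ t` gives `Φ₂(L∣t) ≤ τ L`, and
the blow-up of `Φ₂` at `W°_t` forces `L < W°_t`. For `t < x_e` the monotonicity of `Φ₂(w∣t)/w`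
gives the reverse inequality, so `L = ω t` by uniqueness of the root. At `t = x_e` the bound
`Φ₂(L∣x_e) > L τ_e(x_e) = τ L` for `L > 0` forces `L = 0`, and `0 ≤ 𝓗 ≤ τ ω → 0`.

As `ω x < W°_x`, inside `g` the cap `W_x` only involves `ξ 0` and the finitely many roadblocks
below `x`, so `g` is left-continuous along with `ω`; cutting `(0, x)` at `x' ↑ x` transfers this
to `𝓗`.
-/

open Set Topology

section Series

variable {q : ℝ}

lemma one_sub_pow_succ_pos (hq : q ∈ Ioo 0 1) (k : ℕ) : 0 < 1 - q ^ (k + 1) :=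
  sub_pos.2 (pow_lt_one₀ hq.1.le hq.2 k.succ_ne_zero)

lemma one_sub_le_one_sub_pow_succ (hq : q ∈ Ioo 0 1) (k : ℕ) : 1 - q ≤ 1 - q ^ (k + 1) :=
  sub_le_sub_left (pow_le_of_le_one hq.1.le hq.2.le k.succ_ne_zero) 1

lemma summable_phiR_terms (hq : q ∈ Ioo 0 1) (n : ℕ) {u : ℝ} (hu0 : 0 ≤ u) (hu1 : u < 1) :
    Summable fun k : ℕ => ((k : ℝ) + 1) ^ n * u ^ (k + 1) / (1 - q ^ (k + 1)) := by
  have hgeom : Summable fun k : ℕ => ((k : ℝ) + 1) ^ n * u ^ (k + 1) := by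
    have := (summable_nat_add_iff 1).2 <| summable_pow_mul_geometric_of_norm_lt_one n
      (r := u) (by rwa [Real.norm_eq_abs, abs_of_nonneg hu0])
    exact this.congr fun k => by push_cast; ring
  refine (hgeom.div_const (1 - q)).of_nonneg_of_le (fun k => ?_) (fun k => ?_)
  · have := one_sub_pow_succ_pos hq k
    positivity
  · exact div_le_div_of_nonneg_left (by positivity) (sub_pos.2 hq.2)
      (one_sub_le_one_sub_pow_succ hq k)

lemma phiR_nonneg (hq : q ∈ Ioo 0 1) (n : ℕ) {u : ℝ} (hu : 0 ≤ u) : 0 ≤ phiR q n u :=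
  tsum_nonneg fun k => by have := one_sub_pow_succ_pos hq k; positivity

lemma phiR_mono (hq : q ∈ Ioo 0 1) (n : ℕ) {u v : ℝ} (hv : 0 ≤ v) (hvu : v ≤ u) (hu : u < 1) :
    phiR q n v ≤ phiR q n u := by
  refine (summable_phiR_terms hq n hv (hvu.trans_lt hu)).tsum_le_tsum (fun k => ?_)
    (summable_phiR_terms hq n (hv.trans hvu) hu)
  have := one_sub_pow_succ_pos hq k
  gcongr

lemma phiR_one_le_phiR_two (hq : q ∈ Ioo 0 1) {u : ℝ} (hu0 : 0 ≤ u) (hu1 : u < 1) :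
    phiR q 1 u ≤ phiR q 2 u := by
  refine (summable_phiR_terms hq 1 hu0 hu1).tsum_le_tsum (fun k => ?_)
    (summable_phiR_terms hq 2 hu0 hu1)
  have := one_sub_pow_succ_pos hq k
  gcongr
  · exact le_add_of_nonneg_left k.cast_nonneg
  · norm_num

lemma div_one_sub_le_phiR (hq : q ∈ Ioo 0 1) (n : ℕ) {u : ℝ} (hu0 : 0 ≤ u) (hu1 : u < 1) :
    u / (1 - q) ≤ phiR q n u := by
  simpa [phiR] using (summable_phiR_terms hq n hu0 hu1).sum_le_tsum {0}
    (fun k _ => by have := one_sub_pow_succ_pos hq k; positivity)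

lemma div_one_sub_add_sq_le_phiR_two (hq : q ∈ Ioo 0 1) {u : ℝ} (hu0 : 0 ≤ u) (hu1 : u < 1) :
    u / (1 - q) + u ^ 2 ≤ phiR q 2 u := by
  have h := (summable_phiR_terms hq 2 hu0 hu1).sum_le_tsum {0, 1}
    (fun k _ => by have := one_sub_pow_succ_pos hq k; positivity)
  have hq2 : 0 < 1 - q ^ 2 := one_sub_pow_succ_pos hq 1
  have hsq : u ^ 2 ≤ 4 * u ^ 2 / (1 - q ^ 2) := by
    rw [le_div_iff₀ hq2]
    nlinarith [sq_nonneg u, sq_nonneg q, mul_nonneg (sq_nonneg u) (sq_nonneg q)]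
  norm_num [Finset.sum_pair] at h
  unfold phiR
  linarith

lemma mul_phiR_two_le_mul (hq : q ∈ Ioo 0 1) {a b : ℝ} (ha : 0 ≤ a) (hab : a ≤ b) (hb : b < 1) :
    b * phiR q 2 a ≤ a * phiR q 2 b := by
  unfold phiR
  rw [← tsum_mul_left, ← tsum_mul_left]
  refine ((summable_phiR_terms hq 2 ha (hab.trans_lt hb)).mul_left b).tsum_le_tsum (fun k => ?_)
    ((summable_phiR_terms hq 2 (ha.trans hab) hb).mul_left a)
  have := one_sub_pow_succ_pos hq k
  have hpow : b * a ^ (k + 1) ≤ a * b ^ (k + 1) := by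
    rw [pow_succ, pow_succ]
    nlinarith [pow_le_pow_left₀ ha hab k, mul_nonneg ha (ha.trans hab)]
  rw [mul_div_assoc', mul_div_assoc']
  gcongr ?_ / _
  nlinarith [sq_nonneg ((k : ℝ) + 1)]

/-- Convexity of `φ₁`, whose derivative is `φ₂(u)/u`. -/
lemma mul_phiR_one_sub_le (hq : q ∈ Ioo 0 1) {u v : ℝ} (hv : 0 ≤ v) (hvu : v ≤ u) (hu : u < 1) :
    u * (phiR q 1 u - phiR q 1 v) ≤ (u - v) * phiR q 2 u := by
  have hsv := summable_phiR_terms hq 1 hv (hvu.trans_lt hu)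
  have hsu1 := summable_phiR_terms hq 1 (hv.trans hvu) hu
  have hsu2 := summable_phiR_terms hq 2 (hv.trans hvu) hu
  unfold phiR
  rw [← hsu1.tsum_sub hsv, ← tsum_mul_left, ← tsum_mul_left]
  refine ((hsu1.sub hsv).mul_left u).tsum_le_tsum (fun k => ?_) (hsu2.mul_left (u - v))
  have := one_sub_pow_succ_pos hq k
  have hpow : u ^ (k + 1) - v ^ (k + 1) ≤ (u - v) * (k + 1) * u ^ k := by
    simpa [abs_of_nonneg, hv, hv.trans hvu, hvu, pow_le_pow_left₀ hv hvu]
      using abs_pow_sub_pow_le u v (k + 1)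
  rw [← sub_div, mul_div_assoc', mul_div_assoc']
  gcongr ?_ / _
  have hk : (0 : ℝ) ≤ k + 1 := by positivity
  calc u * (((k : ℝ) + 1) ^ 1 * u ^ (k + 1) - ((k : ℝ) + 1) ^ 1 * v ^ (k + 1))
      = u * ((k + 1) * (u ^ (k + 1) - v ^ (k + 1))) := by ring
    _ ≤ u * ((k + 1) * ((u - v) * (k + 1) * u ^ k)) := by gcongr; linarith
    _ = (u - v) * (((k : ℝ) + 1) ^ 2 * u ^ (k + 1)) := by ring

end Series

noncomputable def PhiSlab (q : ℝ) (n : ℕ) (ξ : ℝ → ℝ) (a c w : ℝ) : ℝ :=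
  ∫ y in Ioo a c, phiR q n (w / ξ y)

lemma PhiI_eq_PhiSlab (q : ℝ) (n : ℕ) (ξ : ℝ → ℝ) (x w : ℝ) :
    PhiI q n ξ x w = PhiSlab q n ξ 0 x w := rfl

lemma ae_restrict_Ioo_neBot {a c : ℝ} (hac : a < c) : (ae (volume.restrict (Ioo a c))).NeBot :=
  ae_restrict_neBot.2 (by simpa [Real.volume_Ioo] using hac)

section Slab

variable {q : ℝ} {n : ℕ} {ξ : ℝ → ℝ} {a c W v w : ℝ}

lemma div_mem_Icc_of_le (hW : 0 < W) (hw : 0 ≤ w) {t : ℝ} (ht : W ≤ t) :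
    w / t ∈ Icc 0 (w / W) :=
  ⟨div_nonneg hw (hW.trans_le ht).le, div_le_div_of_nonneg_left hw hW ht⟩

lemma aestronglyMeasurable_phiR_div (hq : q ∈ Ioo 0 1) (hmeas : Measurable ξ) (hW : 0 < W)
    (hw0 : 0 ≤ w) (hwW : w < W) (hWξ : ∀ᵐ y ∂volume.restrict (Ioo a c), W ≤ ξ y) :
    AEStronglyMeasurable (fun y => phiR q n (w / ξ y)) (volume.restrict (Ioo a c)) := by
  have hρ : 0 ≤ w / W := div_nonneg hw0 hW.le
  have hρ1 : w / W < 1 := (div_lt_one hW).2 hwW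
  -- `phiR q n` is monotone on `[0, w / W]`, so its extension by constants is measurable
  have hmono : Monotone (IccExtend hρ fun t => phiR q n t) :=
    Monotone.IccExtend hρ fun s t hst => phiR_mono hq n s.2.1 hst (t.2.2.trans_lt hρ1)
  refine (hmono.measurable.comp ((measurable_const (a := w)).div hmeas)).aestronglyMeasurable
    |>.congr ?_
  filter_upwards [hWξ] with y hy
  exact IccExtend_of_mem hρ _ (div_mem_Icc_of_le hW hw0 hy)

lemma integrableOn_phiR_div (hq : q ∈ Ioo 0 1) (hmeas : Measurable ξ) (hW : 0 < W)
    (hw0 : 0 ≤ w) (hwW : w < W) (hWξ : ∀ᵐ y ∂volume.restrict (Ioo a c), W ≤ ξ y) :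
    IntegrableOn (fun y => phiR q n (w / ξ y)) (Ioo a c) := by
  refine Integrable.mono' (integrableOn_const (C := phiR q n (w / W)) measure_Ioo_lt_top.ne)
    (aestronglyMeasurable_phiR_div hq hmeas hW hw0 hwW hWξ) ?_
  filter_upwards [hWξ] with y hy
  have hy' := div_mem_Icc_of_le hW hw0 hy
  rw [Real.norm_eq_abs, abs_of_nonneg (phiR_nonneg hq n hy'.1)]
  exact phiR_mono hq n hy'.1 hy'.2 ((div_lt_one hW).2 hwW)


lemma PhiSlab_nonneg (hq : q ∈ Ioo 0 1) (hW : 0 < W) (hw : 0 ≤ w)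
    (hWξ : ∀ᵐ y ∂volume.restrict (Ioo a c), W ≤ ξ y) : 0 ≤ PhiSlab q n ξ a c w :=
  integral_nonneg_of_ae <| hWξ.mono fun _ hy => phiR_nonneg hq n (div_mem_Icc_of_le hW hw hy).1

lemma PhiSlab_mono (hq : q ∈ Ioo 0 1) (hmeas : Measurable ξ) (hW : 0 < W) (hv : 0 ≤ v)
    (hvw : v ≤ w) (hwW : w < W) (hWξ : ∀ᵐ y ∂volume.restrict (Ioo a c), W ≤ ξ y) :
    PhiSlab q n ξ a c v ≤ PhiSlab q n ξ a c w := by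
  refine integral_mono_ae (integrableOn_phiR_div hq hmeas hW hv (hvw.trans_lt hwW) hWξ)
    (integrableOn_phiR_div hq hmeas hW (hv.trans hvw) hwW hWξ) ?_
  filter_upwards [hWξ] with y hy
  have hy' := div_mem_Icc_of_le hW (hv.trans hvw) hy
  exact phiR_mono hq n (div_nonneg hv (hW.trans_le hy).le)
    (div_le_div_of_nonneg_right hvw (hW.trans_le hy).le) (hy'.2.trans_lt ((div_lt_one hW).2 hwW))

lemma PhiSlab_le_mul (hq : q ∈ Ioo 0 1) (hmeas : Measurable ξ) (hac : a ≤ c) (hW : 0 < W)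
    (hw0 : 0 ≤ w) (hwW : w < W) (hWξ : ∀ᵐ y ∂volume.restrict (Ioo a c), W ≤ ξ y) :
    PhiSlab q n ξ a c w ≤ (c - a) * phiR q n (w / W) := by
  have h := integral_mono_ae (integrableOn_phiR_div (n := n) hq hmeas hW hw0 hwW hWξ)
    (integrableOn_const (C := phiR q n (w / W)) measure_Ioo_lt_top.ne) <| by
      filter_upwards [hWξ] with y hy
      have hy' := div_mem_Icc_of_le hW hw0 hy
      exact phiR_mono hq n hy'.1 hy'.2 ((div_lt_one hW).2 hwW)
  rwa [setIntegral_const, Real.volume_real_Ioo_of_le hac, smul_eq_mul] at h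

lemma PhiSlab_pos (hq : q ∈ Ioo 0 1) (hmeas : Measurable ξ) (hac : a < c) (hW : 0 < W)
    (hw0 : 0 < w) (hwW : w < W) (hWξ : ∀ᵐ y ∂volume.restrict (Ioo a c), W ≤ ξ y) {M : ℝ}
    (hξM : ∀ᵐ y ∂volume.restrict (Ioo a c), ξ y ≤ M) : 0 < PhiSlab q n ξ a c w := by
  have := ae_restrict_Ioo_neBot hac
  obtain ⟨_, hWy₀, hy₀M⟩ := (hWξ.and hξM).exists
  have h := integral_mono_ae (integrableOn_const (C := w / M / (1 - q)) measure_Ioo_lt_top.ne)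
    (integrableOn_phiR_div (n := n) hq hmeas hW hw0.le hwW hWξ) <| by
      filter_upwards [hWξ, hξM] with y hWy hyM
      have hy' := div_mem_Icc_of_le hW hw0.le hWy
      exact (div_le_div_of_nonneg_right (div_le_div_of_nonneg_left hw0.le (hW.trans_le hWy) hyM)
        (sub_pos.2 hq.2).le).trans
        (div_one_sub_le_phiR hq n hy'.1 (hy'.2.trans_lt ((div_lt_one hW).2 hwW)))
  rw [setIntegral_const, Real.volume_real_Ioo_of_le hac.le, smul_eq_mul] at h
  refine lt_of_lt_of_le ?_ h
  have := sub_pos.2 hq.2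
  have := sub_pos.2 hac
  have : 0 < M := by linarith
  positivity

lemma PhiSlab_one_le_two (hq : q ∈ Ioo 0 1) (hmeas : Measurable ξ) (hW : 0 < W) (hw0 : 0 ≤ w)
    (hwW : w < W) (hWξ : ∀ᵐ y ∂volume.restrict (Ioo a c), W ≤ ξ y) :
    PhiSlab q 1 ξ a c w ≤ PhiSlab q 2 ξ a c w := by
  refine integral_mono_ae (integrableOn_phiR_div hq hmeas hW hw0 hwW hWξ)
    (integrableOn_phiR_div hq hmeas hW hw0 hwW hWξ) ?_
  filter_upwards [hWξ] with y hy
  have hy' := div_mem_Icc_of_le hW hw0 hy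
  exact phiR_one_le_phiR_two hq hy'.1 (hy'.2.trans_lt ((div_lt_one hW).2 hwW))

lemma mul_PhiSlab_two_le_mul (hq : q ∈ Ioo 0 1) (hmeas : Measurable ξ) (hW : 0 < W)
    (hv : 0 ≤ v) (hvw : v ≤ w) (hwW : w < W) (hWξ : ∀ᵐ y ∂volume.restrict (Ioo a c), W ≤ ξ y) :
    w * PhiSlab q 2 ξ a c v ≤ v * PhiSlab q 2 ξ a c w := by
  unfold PhiSlab
  rw [← integral_const_mul, ← integral_const_mul]
  refine integral_mono_ae
    ((integrableOn_phiR_div hq hmeas hW hv (hvw.trans_lt hwW) hWξ).const_mul w)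
    ((integrableOn_phiR_div hq hmeas hW (hv.trans hvw) hwW hWξ).const_mul v) ?_
  filter_upwards [hWξ] with y hy
  have hy0 : 0 < ξ y := hW.trans_le hy
  have hy' := div_mem_Icc_of_le hW (hv.trans hvw) hy
  have h := mul_phiR_two_le_mul hq (div_nonneg hv hy0.le) (div_le_div_of_nonneg_right hvw hy0.le)
    (hy'.2.trans_lt ((div_lt_one hW).2 hwW))
  -- the inequality is homogeneous: multiply through by `ξ y`
  have := mul_le_mul_of_nonneg_left h hy0.le
  rwa [← mul_assoc, ← mul_assoc, mul_div_cancel₀ _ hy0.ne', mul_div_cancel₀ _ hy0.ne'] at this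

lemma mul_PhiSlab_one_sub_le (hq : q ∈ Ioo 0 1) (hmeas : Measurable ξ) (hW : 0 < W)
    (hv : 0 ≤ v) (hvw : v ≤ w) (hwW : w < W) (hWξ : ∀ᵐ y ∂volume.restrict (Ioo a c), W ≤ ξ y) :
    w * (PhiSlab q 1 ξ a c w - PhiSlab q 1 ξ a c v) ≤ (w - v) * PhiSlab q 2 ξ a c w := by
  have hv1 := integrableOn_phiR_div (n := 1) hq hmeas hW hv (hvw.trans_lt hwW) hWξ
  have hw1 := integrableOn_phiR_div (n := 1) hq hmeas hW (hv.trans hvw) hwW hWξ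
  have hw2 := integrableOn_phiR_div (n := 2) hq hmeas hW (hv.trans hvw) hwW hWξ
  unfold PhiSlab
  rw [← integral_sub hw1 hv1, ← integral_const_mul, ← integral_const_mul]
  refine integral_mono_ae ((hw1.sub hv1).const_mul w) (hw2.const_mul (w - v)) ?_
  filter_upwards [hWξ] with y hy
  have hy0 : 0 < ξ y := hW.trans_le hy
  have hy' := div_mem_Icc_of_le hW (hv.trans hvw) hy
  have h := mul_phiR_one_sub_le hq (div_nonneg hv hy0.le) (div_le_div_of_nonneg_right hvw hy0.le)
    (hy'.2.trans_lt ((div_lt_one hW).2 hwW))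
  have := mul_le_mul_of_nonneg_left h hy0.le
  rwa [← mul_assoc, ← mul_assoc, mul_div_cancel₀ _ hy0.ne', ← sub_div,
    mul_div_cancel₀ _ hy0.ne'] at this

lemma PhiI_eq_add_PhiSlab (hq : q ∈ Ioo 0 1) (hmeas : Measurable ξ) {x₁ x₂ : ℝ} (hx₁ : 0 ≤ x₁)
    (hx₁₂ : x₁ ≤ x₂) (hW : 0 < W) (hw0 : 0 ≤ w) (hwW : w < W)
    (hWξ : ∀ᵐ y ∂volume.restrict (Ioo 0 x₂), W ≤ ξ y) :
    PhiI q n ξ x₂ w = PhiI q n ξ x₁ w + PhiSlab q n ξ x₁ x₂ w := by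
  have hI := (integrableOn_Ioc_iff_integrableOn_Ioo (by finiteness)).2
    (integrableOn_phiR_div (n := n) hq hmeas hW hw0 hwW hWξ)
  unfold PhiI PhiSlab
  simp only [← integral_Ioc_eq_integral_Ioo]
  rw [← Ioc_union_Ioc_eq_Ioc hx₁ hx₁₂, setIntegral_union (Ioc_disjoint_Ioc_of_le le_rfl)
    measurableSet_Ioc (hI.mono_set (Ioc_subset_Ioc_right hx₁₂))
    (hI.mono_set (Ioc_subset_Ioc_left hx₁))]

lemma mul_tauE_lt_PhiI_two (hq : q ∈ Ioo 0 1) (hmeas : Measurable ξ) {x M : ℝ} (hx : 0 < x)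
    (hW : 0 < W) (hw0 : 0 < w) (hwW : w < W) (hWξ : ∀ᵐ y ∂volume.restrict (Ioo 0 x), W ≤ ξ y)
    (hξM : ∀ᵐ y ∂volume.restrict (Ioo 0 x), ξ y ≤ M) :
    w * tauE q ξ x < PhiI q 2 ξ x w := by
  have := ae_restrict_Ioo_neBot hx
  obtain ⟨_, hWy₀, hy₀M⟩ := (hWξ.and hξM).exists
  have hM : 0 < M := by linarith
  have hτ : IntegrableOn (fun y => 1 / ((1 - q) * ξ y)) (Ioo 0 x) := by
    refine Integrable.mono' (integrableOn_const (C := 1 / ((1 - q) * W)) measure_Ioo_lt_top.ne)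
      (measurable_const.div (measurable_const.mul hmeas)).aestronglyMeasurable ?_
    filter_upwards [hWξ] with y hy
    have := sub_pos.2 hq.2
    rw [Real.norm_eq_abs, abs_of_nonneg (by have := hW.trans_le hy; positivity)]
    gcongr
  have hsq : IntegrableOn (fun _ => w ^ 2 / M ^ 2) (Ioo 0 x) :=
    integrableOn_const measure_Ioo_lt_top.ne
  have h := integral_mono_ae ((hτ.const_mul w).add hsq)
    (integrableOn_phiR_div (n := 2) hq hmeas hW hw0.le hwW hWξ) <| by
      filter_upwards [hWξ, hξM] with y hWy hyM
      have hy0 : 0 < ξ y := hW.trans_le hWy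
      have hy' := div_mem_Icc_of_le hW hw0.le hWy
      calc w * (1 / ((1 - q) * ξ y)) + w ^ 2 / M ^ 2
          ≤ w / ξ y / (1 - q) + (w / ξ y) ^ 2 := by
            rw [div_pow]
            gcongr
            exact le_of_eq (by field_simp)
        _ ≤ phiR q 2 (w / ξ y) :=
            div_one_sub_add_sq_le_phiR_two hq hy'.1 (hy'.2.trans_lt ((div_lt_one hW).2 hwW))
  simp only [Pi.add_apply] at h
  rw [integral_add (hτ.const_mul w) hsq, integral_const_mul, setIntegral_const,
    Real.volume_real_Ioo_of_le hx.le, smul_eq_mul] at h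
  have : 0 < (x - 0) * (w ^ 2 / M ^ 2) := by positivity
  exact lt_of_lt_of_le (by unfold tauE; linarith) h

end Slab

structure IsAdmissibleSpeed (ξ : ℝ → ℝ) (m M : ℝ) : Prop where
  measurable : Measurable ξ
  pos : 0 < m
  bounds : ∀ y, 0 ≤ y → m ≤ ξ y ∧ ξ y ≤ M

/-- `W°_x`. -/
noncomputable def essInfIoo (ξ : ℝ → ℝ) (x : ℝ) : ℝ :=
  essInf ξ (volume.restrict (Ioo 0 x))

namespace IsAdmissibleSpeed

variable {ξ : ℝ → ℝ} {m M a c x : ℝ}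

lemma ae_bounds (hξ : IsAdmissibleSpeed ξ m M) (ha : 0 ≤ a) :
    ∀ᵐ y ∂volume.restrict (Ioo a c), m ≤ ξ y ∧ ξ y ≤ M := by
  filter_upwards [ae_restrict_mem measurableSet_Ioo] with y hy
  exact hξ.bounds y (ha.trans hy.1.le)

lemma ae_le (hξ : IsAdmissibleSpeed ξ m M) (ha : 0 ≤ a) :
    ∀ᵐ y ∂volume.restrict (Ioo a c), ξ y ≤ M :=
  (hξ.ae_bounds ha).mono fun _ hy => hy.2

lemma le_essInfIoo (hξ : IsAdmissibleSpeed ξ m M) (hx : 0 < x) : m ≤ essInfIoo ξ x := by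
  have := ae_restrict_Ioo_neBot hx
  exact le_essInf_of_ae_le m ((hξ.ae_bounds le_rfl).mono fun _ hy => hy.1)
    (isBoundedUnder_of_eventually_le (hξ.ae_le le_rfl)).isCoboundedUnder_ge

lemma essInfIoo_pos (hξ : IsAdmissibleSpeed ξ m M) (hx : 0 < x) : 0 < essInfIoo ξ x :=
  hξ.pos.trans_le (hξ.le_essInfIoo hx)

lemma ae_essInfIoo_le (hξ : IsAdmissibleSpeed ξ m M) (ha : 0 ≤ a) (hcx : c ≤ x) :
    ∀ᵐ y ∂volume.restrict (Ioo a c), essInfIoo ξ x ≤ ξ y :=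
  ae_restrict_of_ae_restrict_of_subset (Ioo_subset_Ioo ha hcx) <| ae_essInf_le <|
    isBoundedUnder_of_eventually_ge ((hξ.ae_bounds le_rfl).mono fun _ hy => hy.1)

end IsAdmissibleSpeed

noncomputable def roadblockMin (ξ : ℝ → ℝ) (B : Set ℝ) (x : ℝ) : ℝ :=
  sInf (insert (ξ 0) (ξ '' {b ∈ B | b < x}))

section Roadblocks

variable {ξ : ℝ → ℝ} {B : Set ℝ}

lemma finite_roadblocks_lt (hB : ∀ x : ℝ, {b ∈ B | b ≤ x}.Finite) (x : ℝ) :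
    {b ∈ B | b < x}.Finite :=
  (hB x).subset fun _ hb => ⟨hb.1, hb.2.le⟩

lemma sInf_insert_eq_min_roadblockMin (hB : ∀ x : ℝ, {b ∈ B | b ≤ x}.Finite) (e x : ℝ) :
    sInf (insert (ξ 0) (insert e (ξ '' {b ∈ B | b < x}))) = min e (roadblockMin ξ B x) := by
  rw [insert_comm, csInf_insert (((finite_roadblocks_lt hB x).image ξ).insert _).bddBelow
    (insert_nonempty _ _)]
  rfl

lemma le_roadblockMin {m M : ℝ} (hξ : IsAdmissibleSpeed ξ m M) (hBpos : ∀ b ∈ B, 0 < b)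
    (x : ℝ) : m ≤ roadblockMin ξ B x := by
  refine le_csInf (insert_nonempty _ _) ?_
  rintro _ (rfl | ⟨b, hb, rfl⟩)
  · exact (hξ.bounds 0 le_rfl).1
  · exact (hξ.bounds b (hBpos b hb.1).le).1

lemma roadblockMin_antitone (hB : ∀ x : ℝ, {b ∈ B | b ≤ x}.Finite) :
    Antitone (roadblockMin ξ B) := fun _ x₂ hx =>
  csInf_le_csInf (((finite_roadblocks_lt hB x₂).image ξ).insert _).bddBelow (insert_nonempty _ _)
    (insert_subset_insert (image_mono fun _ hb => ⟨hb.1, hb.2.trans_le hx⟩))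

lemma tendsto_roadblockMin_nhdsLT (hB : ∀ x : ℝ, {b ∈ B | b ≤ x}.Finite) (x : ℝ) :
    Tendsto (roadblockMin ξ B) (𝓝[<] x) (𝓝 (roadblockMin ξ B x)) := by
  -- only finitely many roadblocks lie below `x`, so just to the left of `x` none is crossed
  have hpass : ∀ᶠ x' in 𝓝[<] x, ∀ b ∈ {b ∈ B | b < x}, b < x' :=
    (eventually_all_finite (finite_roadblocks_lt hB x)).2 fun b hb =>
      eventually_nhdsWithin_of_eventually_nhds (eventually_gt_nhds hb.2)
  refine tendsto_const_nhds.congr' ?_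
  filter_upwards [hpass, self_mem_nhdsWithin] with x' hx' hx'x
  refine congrArg (fun S => sInf (insert (ξ 0) (ξ '' S))) (Set.ext fun b => ?_)
  exact ⟨fun hb => ⟨hb.1, hx' b hb⟩, fun hb => ⟨hb.1, hb.2.trans hx'x⟩⟩

end Roadblocks

def IsOmegaRoot (q τ : ℝ) (ξ : ℝ → ℝ) (x w : ℝ) : Prop :=
  w ∈ Ioo 0 (essInfIoo ξ x) ∧ τ * w = PhiI q 2 ξ x w

/-- `𝓗(τ,x) = heightAt q τ ξ x (min ω°_{τ,x} W_x)` for `0 < x < x_e(τ)`. -/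
noncomputable def heightAt (q τ : ℝ) (ξ : ℝ → ℝ) (x w : ℝ) : ℝ :=
  τ * w - PhiI q 1 ξ x w

section Roots

variable {q τ m M : ℝ} {ξ : ℝ → ℝ} {x r u v w : ℝ}

lemma IsOmegaRoot.PhiI_two_le (hq : q ∈ Ioo 0 1) (hξ : IsAdmissibleSpeed ξ m M) (hx : 0 < x)
    (hr : IsOmegaRoot q τ ξ x r) (hu : 0 < u) (hur : u ≤ r) : PhiI q 2 ξ x u ≤ τ * u := by
  have h := mul_PhiSlab_two_le_mul hq hξ.measurable (hξ.essInfIoo_pos hx) hu.le hur hr.1.2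
    (hξ.ae_essInfIoo_le le_rfl le_rfl)
  rw [← PhiI_eq_PhiSlab, ← PhiI_eq_PhiSlab, ← hr.2] at h
  exact le_of_mul_le_mul_left (by linarith) hr.1.1

lemma IsOmegaRoot.heightAt_mono (hq : q ∈ Ioo 0 1) (hξ : IsAdmissibleSpeed ξ m M) (hx : 0 < x)
    (hr : IsOmegaRoot q τ ξ x r) (hv : 0 < v) (hvu : v ≤ u) (hur : u ≤ r) :
    heightAt q τ ξ x v ≤ heightAt q τ ξ x u := by
  have hu : 0 < u := hv.trans_le hvu
  have hconv := mul_PhiSlab_one_sub_le hq hξ.measurable (hξ.essInfIoo_pos hx) hv.le hvu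
    (hur.trans_lt hr.1.2) (hξ.ae_essInfIoo_le le_rfl le_rfl)
  rw [← PhiI_eq_PhiSlab, ← PhiI_eq_PhiSlab, ← PhiI_eq_PhiSlab] at hconv
  have h2 := mul_le_mul_of_nonneg_left (hr.PhiI_two_le hq hξ hx hu hur) (sub_nonneg.2 hvu)
  unfold heightAt
  nlinarith

lemma PhiI_lt_PhiI (hq : q ∈ Ioo 0 1) (hξ : IsAdmissibleSpeed ξ m M) (n : ℕ) {x₁ x₂ : ℝ}
    (hx₁ : 0 < x₁) (hx₁₂ : x₁ < x₂) (hw : 0 < w) (hwW : w < essInfIoo ξ x₂) :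
    PhiI q n ξ x₁ w < PhiI q n ξ x₂ w := by
  have hW := hξ.essInfIoo_pos (hx₁.trans hx₁₂)
  rw [PhiI_eq_add_PhiSlab hq hξ.measurable hx₁.le hx₁₂.le hW hw.le hwW
    (hξ.ae_essInfIoo_le le_rfl le_rfl)]
  linarith [PhiSlab_pos (n := n) hq hξ.measurable hx₁₂ hW hw hwW
    (hξ.ae_essInfIoo_le hx₁.le le_rfl) (hξ.ae_le hx₁.le)]

lemma IsOmegaRoot.lt_of_lt (hq : q ∈ Ioo 0 1) (hξ : IsAdmissibleSpeed ξ m M) {x₁ x₂ r₁ r₂ : ℝ}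
    (hx₁ : 0 < x₁) (hx₁₂ : x₁ < x₂) (hr₁ : IsOmegaRoot q τ ξ x₁ r₁)
    (hr₂ : IsOmegaRoot q τ ξ x₂ r₂) : r₂ < r₁ := by
  by_contra! h
  have hlt := PhiI_lt_PhiI hq hξ 2 hx₁ hx₁₂ hr₁.1.1 (h.trans_lt hr₂.1.2)
  have hle := hr₂.PhiI_two_le hq hξ (hx₁.trans hx₁₂) hr₁.1.1 h
  linarith [hr₁.2]

lemma heightAt_lt_heightAt (hq : q ∈ Ioo 0 1) (hξ : IsAdmissibleSpeed ξ m M) {x₁ x₂ r₁ r₂ g₁ g₂ : ℝ}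
    (hx₁ : 0 < x₁) (hx₁₂ : x₁ < x₂) (hr₁ : IsOmegaRoot q τ ξ x₁ r₁)
    (hr₂ : IsOmegaRoot q τ ξ x₂ r₂) (hg₂ : 0 < g₂) (hg₂₁ : g₂ ≤ g₁) (hg₁ : g₁ ≤ r₁)
    (hg₂r : g₂ ≤ r₂) : heightAt q τ ξ x₂ g₂ < heightAt q τ ξ x₁ g₁ := by
  -- pass through `w = min g₁ r₂`, admissible at both `x₁` and `x₂`
  have hw : 0 < min g₁ r₂ := lt_min (hg₂.trans_le hg₂₁) hr₂.1.1
  calc heightAt q τ ξ x₂ g₂ ≤ heightAt q τ ξ x₂ (min g₁ r₂) :=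
        hr₂.heightAt_mono hq hξ (hx₁.trans hx₁₂) hg₂ (le_min hg₂₁ hg₂r) (min_le_right _ _)
    _ < heightAt q τ ξ x₁ (min g₁ r₂) := by
        unfold heightAt
        linarith [PhiI_lt_PhiI hq hξ 1 hx₁ hx₁₂ hw ((min_le_right _ _).trans_lt hr₂.1.2)]
    _ ≤ heightAt q τ ξ x₁ g₁ :=
        hr₁.heightAt_mono hq hξ hx₁ hw (min_le_left _ _) hg₁

lemma IsOmegaRoot.heightAt_nonneg (hq : q ∈ Ioo 0 1) (hξ : IsAdmissibleSpeed ξ m M) (hx : 0 < x)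
    (hr : IsOmegaRoot q τ ξ x r) (hu : 0 < u) (hur : u ≤ r) : 0 ≤ heightAt q τ ξ x u := by
  have h12 := PhiSlab_one_le_two hq hξ.measurable (hξ.essInfIoo_pos hx) hu.le
    (hur.trans_lt hr.1.2) (hξ.ae_essInfIoo_le le_rfl le_rfl)
  rw [← PhiI_eq_PhiSlab, ← PhiI_eq_PhiSlab] at h12
  unfold heightAt
  linarith [hr.PhiI_two_le hq hξ hx hu hur]

lemma heightAt_le_mul (hq : q ∈ Ioo 0 1) (hξ : IsAdmissibleSpeed ξ m M) (hu : 0 ≤ u) :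
    heightAt q τ ξ x u ≤ τ * u :=
  sub_le_self _ <| PhiSlab_nonneg hq hξ.pos hu (hξ.ae_bounds le_rfl |>.mono fun _ hy => hy.1)

end Roots

section RootLimits

variable {q τ m M : ℝ} {ξ ω : ℝ → ℝ} {t w : ℝ}

lemma strictAntiOn_of_isOmegaRoot (hq : q ∈ Ioo 0 1) (hξ : IsAdmissibleSpeed ξ m M)
    {s : Set ℝ} (hs : s ⊆ Ioi 0) (hroot : ∀ x ∈ s, IsOmegaRoot q τ ξ x (ω x)) :
    StrictAntiOn ω s := fun _ hx₁ _ hx₂ hx₁₂ =>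
  (hroot _ hx₁).lt_of_lt hq hξ (hs hx₁) hx₁₂ (hroot _ hx₂)

lemma exists_tendsto_nhdsLT_of_isOmegaRoot (hq : q ∈ Ioo 0 1) (hξ : IsAdmissibleSpeed ξ m M)
    (ht : 0 < t) (hroot : ∀ x ∈ Ioo 0 t, IsOmegaRoot q τ ξ x (ω x)) :
    ∃ L, 0 ≤ L ∧ (∀ x ∈ Ioo 0 t, L ≤ ω x) ∧ Tendsto ω (𝓝[<] t) (𝓝 L) := by
  have hpos : ∀ y ∈ ω '' Ioo 0 t, 0 ≤ y := by
    rintro _ ⟨x, hx, rfl⟩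
    exact (hroot x hx).1.1.le
  refine ⟨sInf (ω '' Ioo 0 t), le_csInf ((nonempty_Ioo.2 ht).image ω) hpos,
    fun x hx => csInf_le ⟨0, hpos⟩ ⟨x, hx, rfl⟩, ?_⟩
  exact (strictAntiOn_of_isOmegaRoot hq hξ (fun _ hx => hx.1) hroot).antitoneOn
    |>.tendsto_nhdsWithin_Ioo_left (nonempty_Ioo.2 ht) ⟨0, hpos⟩

lemma PhiI_two_le_mul_of_eventually_le (hq : q ∈ Ioo 0 1) (hξ : IsAdmissibleSpeed ξ m M)
    (ht : 0 < t) (hroot : ∀ᶠ x in 𝓝[<] t, IsOmegaRoot q τ ξ x (ω x) ∧ w ≤ ω x) (hw : 0 < w)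
    (hwt : w < essInfIoo ξ t) : PhiI q 2 ξ t w ≤ τ * w := by
  set C := phiR q 2 (w / essInfIoo ξ t)
  have hbound : ∀ᶠ x in 𝓝[<] t, PhiI q 2 ξ t w ≤ τ * w + (t - x) * C := by
    filter_upwards [hroot, Ioo_mem_nhdsLT ht] with x ⟨hrx, hwx⟩ hx
    have hW := hξ.essInfIoo_pos ht
    have hξt := hξ.ae_essInfIoo_le (x := t) le_rfl le_rfl
    rw [PhiI_eq_add_PhiSlab hq hξ.measurable hx.1.le hx.2.le hW hw.le hwt hξt]
    linarith [hrx.PhiI_two_le hq hξ hx.1 hw hwx, PhiSlab_le_mul (n := 2) hq hξ.measurable hx.2.le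
      hW hw.le hwt (hξ.ae_essInfIoo_le (x := t) hx.1.le le_rfl)]
  have hlim : Tendsto (fun x => τ * w + (t - x) * C) (𝓝 t) (𝓝 (τ * w)) := by
    have h : Continuous fun x : ℝ => τ * w + (t - x) * C := by fun_prop
    simpa using h.tendsto t
  exact ge_of_tendsto (hlim.mono_left nhdsWithin_le_nhds) hbound

lemma lt_essInfIoo_of_le_isOmegaRoot (hq : q ∈ Ioo 0 1) (hξ : IsAdmissibleSpeed ξ m M)
    (ht : 0 < t) (hroot : ∀ x ∈ Ioo 0 t, IsOmegaRoot q τ ξ x (ω x)) {L : ℝ}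
    (hL : ∀ x ∈ Ioo 0 t, L ≤ ω x)
    (hblow : Tendsto (PhiI q 2 ξ t) (𝓝[<] (essInfIoo ξ t)) atTop) : L < essInfIoo ξ t := by
  by_contra! hEL
  have hW := hξ.essInfIoo_pos ht
  obtain ⟨w, hbig, hw0, hwt⟩ := ((hblow.eventually_gt_atTop (|τ| * essInfIoo ξ t)).and
    ((eventually_nhdsWithin_of_eventually_nhds (eventually_gt_nhds hW)).and
      self_mem_nhdsWithin)).exists
  have hsub := PhiI_two_le_mul_of_eventually_le hq hξ ht (w := w) (by
    filter_upwards [Ioo_mem_nhdsLT ht] with x hx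
    exact ⟨hroot x hx, hwt.le.trans (hEL.trans (hL x hx))⟩) hw0 hwt
  nlinarith [abs_nonneg τ, le_abs_self τ]

lemma tendsto_nhdsLT_of_isOmegaRoot (hq : q ∈ Ioo 0 1) (hξ : IsAdmissibleSpeed ξ m M)
    (ht : 0 < t) (hroot : ∀ x ∈ Ioc 0 t, IsOmegaRoot q τ ξ x (ω x))
    (huniq : ∀ w, IsOmegaRoot q τ ξ t w → w = ω t)
    (hblow : Tendsto (PhiI q 2 ξ t) (𝓝[<] (essInfIoo ξ t)) atTop) :
    Tendsto ω (𝓝[<] t) (𝓝 (ω t)) := by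
  have hroot' : ∀ x ∈ Ioo 0 t, IsOmegaRoot q τ ξ x (ω x) := fun x hx =>
    hroot x (Ioo_subset_Ioc_self hx)
  have hrt := hroot t ⟨ht, le_rfl⟩
  obtain ⟨L, -, hLω, hlim⟩ := exists_tendsto_nhdsLT_of_isOmegaRoot hq hξ ht hroot'
  have hωL : ω t ≤ L := ge_of_tendsto hlim <| by
    filter_upwards [Ioo_mem_nhdsLT ht] with x hx
    exact ((hroot' x hx).lt_of_lt hq hξ hx.1 hx.2 hrt).le
  have hLt := lt_essInfIoo_of_le_isOmegaRoot hq hξ ht hroot' hLω hblow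
  have hL0 : 0 < L := hrt.1.1.trans_le hωL
  have hsub : PhiI q 2 ξ t L ≤ τ * L := PhiI_two_le_mul_of_eventually_le hq hξ ht (by
    filter_upwards [Ioo_mem_nhdsLT ht] with x hx using ⟨hroot' x hx, hLω x hx⟩) hL0 hLt
  -- `Φ₂(w∣t)/w` is nondecreasing, so `L ≥ ω t` is supercritical as well
  have hsuper : τ * L ≤ PhiI q 2 ξ t L := by
    have h := mul_PhiSlab_two_le_mul hq hξ.measurable (hξ.essInfIoo_pos ht) hrt.1.1.le hωL hLt
      (hξ.ae_essInfIoo_le le_rfl le_rfl)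
    rw [← PhiI_eq_PhiSlab, ← PhiI_eq_PhiSlab, ← hrt.2] at h
    nlinarith [hrt.1.1]
  rwa [← huniq L ⟨⟨hL0, hLt⟩, le_antisymm hsuper hsub⟩]

lemma tendsto_nhdsLT_zero_of_isOmegaRoot (hq : q ∈ Ioo 0 1) (hξ : IsAdmissibleSpeed ξ m M)
    (ht : 0 < t) (hroot : ∀ x ∈ Ioo 0 t, IsOmegaRoot q τ ξ x (ω x)) (hτ : tauE q ξ t = τ)
    (hblow : Tendsto (PhiI q 2 ξ t) (𝓝[<] (essInfIoo ξ t)) atTop) :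
    Tendsto ω (𝓝[<] t) (𝓝 0) := by
  obtain ⟨L, hL0, hLω, hlim⟩ := exists_tendsto_nhdsLT_of_isOmegaRoot hq hξ ht hroot
  obtain rfl | hLpos := hL0.eq_or_lt
  · exact hlim
  have hLt := lt_essInfIoo_of_le_isOmegaRoot hq hξ ht hroot hLω hblow
  have hsub : PhiI q 2 ξ t L ≤ τ * L := PhiI_two_le_mul_of_eventually_le hq hξ ht (by
    filter_upwards [Ioo_mem_nhdsLT ht] with x hx using ⟨hroot x hx, hLω x hx⟩) hLpos hLt
  have hsuper := mul_tauE_lt_PhiI_two hq hξ.measurable ht (hξ.essInfIoo_pos ht) hLpos hLt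
    (hξ.ae_essInfIoo_le le_rfl le_rfl) (hξ.ae_le le_rfl)
  rw [hτ, mul_comm] at hsuper
  exact absurd hsub (not_le.2 hsuper)

end RootLimits

section Height

variable {q τ m M : ℝ} {ξ : ℝ → ℝ} {x : ℝ}

lemma PhiI_le_PhiI_add_mul (hq : q ∈ Ioo 0 1) (hξ : IsAdmissibleSpeed ξ m M) (n : ℕ)
    {x' w w' r : ℝ} (hx' : 0 < x') (hx'x : x' ≤ x) (hw : 0 ≤ w) (hww' : w ≤ w') (hw'r : w' ≤ r)
    (hr : r < essInfIoo ξ x) :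
    PhiI q n ξ x w ≤ PhiI q n ξ x' w' + (x - x') * phiR q n (r / essInfIoo ξ x) := by
  have hW := hξ.essInfIoo_pos (hx'.trans_le hx'x)
  have hξx := hξ.ae_essInfIoo_le (x := x) le_rfl le_rfl
  have hw' : w' < essInfIoo ξ x := hw'r.trans_lt hr
  calc PhiI q n ξ x w ≤ PhiI q n ξ x w' :=
        PhiSlab_mono hq hξ.measurable hW hw hww' hw' hξx
    _ = PhiI q n ξ x' w' + PhiSlab q n ξ x' x w' :=
        PhiI_eq_add_PhiSlab hq hξ.measurable hx'.le hx'x hW (hw.trans hww') hw' hξx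
    _ ≤ PhiI q n ξ x' w' + (x - x') * phiR q n (w' / essInfIoo ξ x) := by
        gcongr
        exact PhiSlab_le_mul hq hξ.measurable hx'x hW (hw.trans hww') hw'
          (hξ.ae_essInfIoo_le hx'.le le_rfl)
    _ ≤ PhiI q n ξ x' w' + (x - x') * phiR q n (r / essInfIoo ξ x) := by
        gcongr
        exact phiR_mono hq n (div_nonneg (hw.trans hww') hW.le) (by gcongr)
          ((div_lt_one hW).2 hr)

lemma tendsto_heightAt_nhdsLT (hq : q ∈ Ioo 0 1) (hξ : IsAdmissibleSpeed ξ m M) (hx : 0 < x)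
    {g : ℝ → ℝ} (hg : Tendsto g (𝓝[<] x) (𝓝 (g x))) (hg0 : 0 ≤ g x)
    (hgE : g x < essInfIoo ξ x) (hgmono : ∀ᶠ x' in 𝓝[<] x, g x ≤ g x')
    (hlow : ∀ᶠ x' in 𝓝[<] x, heightAt q τ ξ x (g x) ≤ heightAt q τ ξ x' (g x')) :
    Tendsto (fun x' => heightAt q τ ξ x' (g x')) (𝓝[<] x) (𝓝 (heightAt q τ ξ x (g x))) := by
  obtain ⟨r, hgr, hrE⟩ := exists_between hgE
  set C := phiR q 1 (r / essInfIoo ξ x)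
  have hup : ∀ᶠ x' in 𝓝[<] x,
      heightAt q τ ξ x' (g x') ≤ τ * g x' - PhiI q 1 ξ x (g x) + (x - x') * C := by
    filter_upwards [hgmono, hg.eventually (gt_mem_nhds hgr),
      Ioo_mem_nhdsLT hx] with x' hgx' hgr' hx'
    have := PhiI_le_PhiI_add_mul hq hξ 1 hx'.1 hx'.2.le hg0 hgx' hgr'.le hrE
    unfold heightAt
    linarith
  have hlim : Tendsto (fun x' => τ * g x' - PhiI q 1 ξ x (g x) + (x - x') * C) (𝓝[<] x)
      (𝓝 (heightAt q τ ξ x (g x))) := by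
    have hlin : Tendsto (fun x' : ℝ => (x - x') * C) (𝓝[<] x) (𝓝 0) := by
      have h : Continuous fun x' : ℝ => (x - x') * C := by fun_prop
      simpa using (h.tendsto x).mono_left nhdsWithin_le_nhds
    simpa [heightAt] using ((hg.const_mul τ).sub_const (PhiI q 1 ξ x (g x))).add hlin
  exact tendsto_of_tendsto_of_tendsto_of_le_of_le' tendsto_const_nhds hlim hlow hup

end Height

section VanishingBeyond

variable {H : ℝ → ℝ} {xe : ℝ}

lemma antitoneOn_Ioi_of_strictAntiOn_Ioo (hanti : StrictAntiOn H (Ioo 0 xe))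
    (hnonneg : ∀ x ∈ Ioo 0 xe, 0 ≤ H x) (hzero : ∀ x, xe ≤ x → H x = 0) :
    AntitoneOn H (Ioi 0) := by
  intro x₁ hx₁ x₂ hx₂ hx₁₂
  rcases lt_or_ge x₂ xe with h₂ | h₂
  · exact hanti.antitoneOn ⟨hx₁, hx₁₂.trans_lt h₂⟩ ⟨hx₂, h₂⟩ hx₁₂
  · rw [hzero x₂ h₂]
    rcases lt_or_ge x₁ xe with h₁ | h₁
    · exact hnonneg x₁ ⟨hx₁, h₁⟩
    · exact (hzero x₁ h₁).ge

lemma tendsto_nhdsLT_of_eq_zero (hzero : ∀ x, xe ≤ x → H x = 0)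
    (hedge : Tendsto H (𝓝[<] xe) (𝓝 0)) {x : ℝ} (hx : xe ≤ x) :
    Tendsto H (𝓝[<] x) (𝓝 (H x)) := by
  rcases hx.eq_or_lt with rfl | hlt
  · rwa [hzero xe le_rfl]
  · refine tendsto_const_nhds.congr' ?_
    filter_upwards [Ioo_mem_nhdsLT hlt] with x' hx'
    rw [hzero x hlt.le, hzero x' hx'.1.le]

end VanishingBeyond

section HeightProfile

variable {q τ m M xe : ℝ} {ξ ω g H : ℝ → ℝ}

lemma strictAntiOn_of_eq_heightAt (hq : q ∈ Ioo 0 1) (hξ : IsAdmissibleSpeed ξ m M)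
    (hroot : ∀ x ∈ Ioo 0 xe, IsOmegaRoot q τ ξ x (ω x)) (hg : ∀ x ∈ Ioo 0 xe, g x ∈ Ioc 0 (ω x))
    (hganti : AntitoneOn g (Ioo 0 xe)) (hH : ∀ x ∈ Ioo 0 xe, H x = heightAt q τ ξ x (g x)) :
    StrictAntiOn H (Ioo 0 xe) := fun x₁ hx₁ x₂ hx₂ hx₁₂ => by
  rw [hH x₁ hx₁, hH x₂ hx₂]
  exact heightAt_lt_heightAt hq hξ hx₁.1 hx₁₂ (hroot x₁ hx₁) (hroot x₂ hx₂) (hg x₂ hx₂).1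
    (hganti hx₁ hx₂ hx₁₂.le) (hg x₁ hx₁).2 (hg x₂ hx₂).2

lemma nonneg_of_eq_heightAt (hq : q ∈ Ioo 0 1) (hξ : IsAdmissibleSpeed ξ m M)
    (hroot : ∀ x ∈ Ioo 0 xe, IsOmegaRoot q τ ξ x (ω x)) (hg : ∀ x ∈ Ioo 0 xe, g x ∈ Ioc 0 (ω x))
    (hH : ∀ x ∈ Ioo 0 xe, H x = heightAt q τ ξ x (g x)) : ∀ x ∈ Ioo 0 xe, 0 ≤ H x := fun x hx => by
  rw [hH x hx]
  exact (hroot x hx).heightAt_nonneg hq hξ hx.1 (hg x hx).1 (hg x hx).2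

lemma tendsto_nhdsLT_zero_of_eq_heightAt (hq : q ∈ Ioo 0 1) (hξ : IsAdmissibleSpeed ξ m M)
    (hτ : 0 ≤ τ) (hxe : 0 < xe) (hroot : ∀ x ∈ Ioo 0 xe, IsOmegaRoot q τ ξ x (ω x))
    (hg : ∀ x ∈ Ioo 0 xe, g x ∈ Ioc 0 (ω x)) (hH : ∀ x ∈ Ioo 0 xe, H x = heightAt q τ ξ x (g x))
    (hω : Tendsto ω (𝓝[<] xe) (𝓝 0)) : Tendsto H (𝓝[<] xe) (𝓝 0) := by
  refine tendsto_of_tendsto_of_tendsto_of_le_of_le' tendsto_const_nhds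
    (by simpa using hω.const_mul τ) ?_ ?_
  · filter_upwards [Ioo_mem_nhdsLT hxe] with x hx using nonneg_of_eq_heightAt hq hξ hroot hg hH x hx
  · filter_upwards [Ioo_mem_nhdsLT hxe] with x hx
    rw [hH x hx]
    exact (heightAt_le_mul hq hξ (hg x hx).1.le).trans
      (mul_le_mul_of_nonneg_left (hg x hx).2 hτ)

lemma tendsto_nhdsLT_of_eq_heightAt (hq : q ∈ Ioo 0 1) (hξ : IsAdmissibleSpeed ξ m M) {x : ℝ}
    (hx : x ∈ Ioo 0 xe) (hroot : ∀ x ∈ Ioo 0 xe, IsOmegaRoot q τ ξ x (ω x))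
    (hg : ∀ x ∈ Ioo 0 xe, g x ∈ Ioc 0 (ω x)) (hganti : AntitoneOn g (Ioo 0 xe))
    (hgx : Tendsto g (𝓝[<] x) (𝓝 (g x))) (hH : ∀ x ∈ Ioo 0 xe, H x = heightAt q τ ξ x (g x))
    (hHanti : AntitoneOn H (Ioo 0 xe)) : Tendsto H (𝓝[<] x) (𝓝 (H x)) := by
  have hleft : ∀ᶠ x' in 𝓝[<] x, x' ∈ Ioo 0 xe ∧ x' ≤ x := by
    filter_upwards [Ioo_mem_nhdsLT hx.1] with x' hx' using ⟨⟨hx'.1, hx'.2.trans hx.2⟩, hx'.2.le⟩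
  have hlim := tendsto_heightAt_nhdsLT (τ := τ) hq hξ hx.1 hgx (hg x hx).1.le
    ((hg x hx).2.trans_lt (hroot x hx).1.2)
    (hleft.mono fun x' hx' => hganti hx'.1 hx hx'.2)
    (hleft.mono fun x' hx' => by rw [← hH x hx, ← hH x' hx'.1]; exact hHanti hx'.1 hx hx'.2)
  rw [hH x hx]
  exact hlim.congr' (hleft.mono fun x' hx' => (hH x' hx'.1).symm)

end HeightProfile

theorem stmt_6 (q : ℝ) (hq : q ∈ Set.Ioo (0:ℝ) 1)
    (ξ : ℝ → ℝ) (hmeas : Measurable ξ) (m M : ℝ) (hm : 0 < m)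
    (hbound : ∀ y : ℝ, 0 ≤ y → m ≤ ξ y ∧ ξ y ≤ M)
    -- roadblocks: a discrete subset of ℝ_{>0}
    (B : Set ℝ) (hBpos : ∀ b ∈ B, 0 < b) (hBfin : ∀ x : ℝ, {b ∈ B | b ≤ x}.Finite)
    (Wo : ℝ → ℝ) (hWo : ∀ x : ℝ, Wo x = essInf ξ (volume.restrict (Set.Ioo 0 x)))
    -- `W_x = min(ξ(0), inf{ξ(b) : b ∈ B, b < x}, W°_x)`
    (WW : ℝ → ℝ)
    (hWW : ∀ x : ℝ, WW x = sInf (insert (ξ 0) (insert (Wo x) (ξ '' {b ∈ B | b < x}))))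
    (hblow : ∀ x : ℝ, 0 < x → Tendsto (fun w => PhiI q 2 ξ x w)
      (nhdsWithin (Wo x) (Set.Iio (Wo x))) atTop)
    (τ : ℝ) (hτ : 0 < τ)
    -- the edge `x_e(τ)`
    (xe : ℝ) (hxe : 0 < xe) (hxeq : tauE q ξ xe = τ)
    -- `ω x` is the unique root of `τ·w = Φ₂(w∣x)` on `(0, W°_x)`, for `0 < x < x_e`
    (ω : ℝ → ℝ)
    (hω : ∀ x : ℝ, 0 < x → x < xe →
      ω x ∈ Set.Ioo 0 (Wo x) ∧ τ * ω x = PhiI q 2 ξ x (ω x) ∧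
      ∀ w ∈ Set.Ioo 0 (Wo x), τ * w = PhiI q 2 ξ x w → w = ω x)
    -- the limit shape `𝓗(τ,·)`
    (H : ℝ → ℝ)
    (hH1 : ∀ x : ℝ, 0 < x → x < xe →
      H x = τ * min (ω x) (WW x) - PhiI q 1 ξ x (min (ω x) (WW x)))
    (hH2 : ∀ x : ℝ, xe ≤ x → H x = 0) :
    (∀ x : ℝ, 0 < x → Tendsto H (nhdsWithin x (Set.Iio x)) (nhds (H x))) ∧
    AntitoneOn H (Set.Ioi 0) ∧
    StrictAntiOn H (Set.Ioo 0 xe) ∧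
    Tendsto H (nhdsWithin xe (Set.Iio xe)) (nhds 0) := by
  have hξ : IsAdmissibleSpeed ξ m M := ⟨hmeas, hm, hbound⟩
  obtain rfl : Wo = essInfIoo ξ := funext hWo
  have hroot : ∀ x ∈ Ioo 0 xe, IsOmegaRoot q τ ξ x (ω x) := fun x hx =>
    ⟨(hω x hx.1 hx.2).1, (hω x hx.1 hx.2).2.1⟩
  set g : ℝ → ℝ := fun x => min (ω x) (roadblockMin ξ B x)
  have hH : ∀ x ∈ Ioo 0 xe, H x = heightAt q τ ξ x (g x) := fun x hx => by
    rw [hH1 x hx.1 hx.2, hWW, sInf_insert_eq_min_roadblockMin hBfin, min_left_comm,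
      min_eq_right ((min_le_left _ _).trans (hroot x hx).1.2.le)]
    rfl
  have hg : ∀ x ∈ Ioo 0 xe, g x ∈ Ioc 0 (ω x) := fun x hx =>
    ⟨lt_min (hroot x hx).1.1 (hξ.pos.trans_le (le_roadblockMin hξ hBpos x)), min_le_left _ _⟩
  have hganti : AntitoneOn g (Ioo 0 xe) := fun a ha b hb hab =>
    min_le_min ((strictAntiOn_of_isOmegaRoot hq hξ (fun _ hx => hx.1) hroot).antitoneOn ha hb hab)
      (roadblockMin_antitone hBfin hab)
  have hstrict := strictAntiOn_of_eq_heightAt hq hξ hroot hg hganti hH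
  have hedge := tendsto_nhdsLT_zero_of_eq_heightAt hq hξ hτ.le hxe hroot hg hH
    (tendsto_nhdsLT_zero_of_isOmegaRoot hq hξ hxe hroot hxeq (hblow xe hxe))
  refine ⟨fun x hx => ?_, antitoneOn_Ioi_of_strictAntiOn_Ioo hstrict
    (nonneg_of_eq_heightAt hq hξ hroot hg hH) hH2, hstrict, hedge⟩
  rcases lt_or_ge x xe with hxe' | hxe'
  · have hωx := tendsto_nhdsLT_of_isOmegaRoot hq hξ hx
      (fun y hy => hroot y ⟨hy.1, hy.2.trans_lt hxe'⟩)
      (fun w hw => (hω x hx hxe').2.2 w hw.1 hw.2) (hblow x hx)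
    exact tendsto_nhdsLT_of_eq_heightAt hq hξ ⟨hx, hxe'⟩ hroot hg hganti
      (hωx.min (tendsto_roadblockMin_nhdsLT hBfin x)) hH hstrict.antitoneOn
  · exact tendsto_nhdsLT_of_eq_zero hH2 hedge hxe'
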